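/- The map Φ[0,1,1] : M₃(ℂ) → M₃(ℂ), X ↦ (1/2)·(D(X) - X^T adjusted as in the definition), i.e., Φ[0,1,1](X)_{ii} = (x_{jj} + x_{kk})/2 for {i,j,k}={1,2,3} and Φ[0,1,1](X)_{ij} = -x_{ij}/2 for i≠j, is a positive map: it maps positive semidefinite matrices to positive semidefinite matrices. -/

import Mathlib

/-!
Φ[0,1,1](X) = ½ (tr X · 1 − X), and a positive semidefinite X satisfies X ≤ λ_max(X) · 1 ≤ tr X · 1,
since its eigenvalues are nonnegative and sum to tr X.
-/

open ComplexOrder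

/-- The map Φ[0,1,1] on M₃(ℂ). -/
noncomputable def Phi011 (X : Matrix (Fin 3) (Fin 3) ℂ) : Matrix (Fin 3) (Fin 3) ℂ :=
  Matrix.of fun i j =>
    if i = j then (X (i + 1) (i + 1) + X (i + 2) (i + 2)) / 2
    else -X i j / 2

namespace Matrix

open scoped MatrixOrder

variable {𝕜 n : Type*} [RCLike 𝕜] [Fintype n] [DecidableEq n] {A : Matrix n n 𝕜}

lemma PosSemidef.le_trace_smul_one (hA : A.PosSemidef) : A ≤ A.trace • 1 := by
  have hle : A ≤ algebraMap ℝ _ (∑ j, hA.1.eigenvalues j) := by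
    refine le_algebraMap_of_spectrum_le fun x hx => ?_
    obtain ⟨i, rfl⟩ := hA.1.spectrum_real_eq_range_eigenvalues ▸ hx
    exact Finset.single_le_sum (fun j _ => hA.eigenvalues_nonneg j) (Finset.mem_univ i)
  rwa [hA.1.trace_eq_sum_eigenvalues, ← RCLike.ofReal_sum, ← RCLike.real_smul_eq_coe_smul (K := 𝕜),
    ← Algebra.algebraMap_eq_smul_one]

lemma PosSemidef.trace_smul_one_sub (hA : A.PosSemidef) : (A.trace • 1 - A).PosSemidef :=
  hA.le_trace_smul_one

end Matrix

lemma Phi011_eq_half_smul_trace_smul_one_sub (X : Matrix (Fin 3) (Fin 3) ℂ) :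
    Phi011 X = (1 / 2 : ℂ) • (X.trace • 1 - X) := by
  ext i j
  fin_cases i <;> fin_cases j <;> simp [Phi011, Matrix.trace, Fin.sum_univ_three] <;> ring

theorem stmt_13 (X : Matrix (Fin 3) (Fin 3) ℂ) (hX : X.PosSemidef) :
    (Phi011 X).PosSemidef := by
  rw [Phi011_eq_half_smul_trace_smul_one_sub]
  exact hX.trace_smul_one_sub.smul one_half_pos.le
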